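/- For the 2D heat kernel G(x,t) = (1/(4πt))e^{−|x|²/(4t)}, the matrix H(x,t) = ∫_t^∞ ∇²G(x,s) ds satisfies the closed-form identity H(x,t) = −(x⊗x/|x|²) G(x,t) + (x⊗x/|x|² − 𝕀/2) (1 − e^{−|x|²/(4t)})/(π|x|²) for all x ≠ 0, t > 0. -/

import Mathlib

/-! Differentiating the Gaussian twice gives
`∂ᵢ∂ⱼG(x,s) = (xᵢxⱼ/(4s²) - δᵢⱼ/(2s)) G(x,s)`, so with `c = |x|²/4` the integrand is a
combination of `e^{-c/s}/s³` and `e^{-c/s}/s²`. These have the explicit primitives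
`e^{-c/s}(1 + c/s)/c²` and `e^{-c/s}/c`, which converge as `s → ∞`; as the integrands are
nonnegative, this yields both absolute integrability on `(t, ∞)` and the closed form. -/

open Real Set MeasureTheory

noncomputable def pd (i : Fin 2) (f : (Fin 2 → ℝ) → ℝ) (x : Fin 2 → ℝ) : ℝ :=
  fderiv ℝ f x (Pi.single i 1)

def nsq (x : Fin 2 → ℝ) : ℝ := x 0 ^ 2 + x 1 ^ 2

/-- 2D heat kernel. -/
noncomputable def heatG (x : Fin 2 → ℝ) (t : ℝ) : ℝ :=
  1 / (4 * π * t) * Real.exp (-(nsq x) / (4 * t))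

/-- Hessian entry `∂_i ∂_j G(·, s)` at `x`. -/
noncomputable def hessG (i j : Fin 2) (x : Fin 2 → ℝ) (s : ℝ) : ℝ :=
  pd i (fun z => pd j (fun w => heatG w s) z) x

open Filter Topology ContinuousLinearMap

lemma nsq_eq_sum (w : Fin 2 → ℝ) : nsq w = ∑ k, w k ^ 2 := by
  simp [nsq, Fin.sum_univ_two]

lemma nsq_pos {x : Fin 2 → ℝ} (hx : x ≠ 0) : 0 < nsq x := by
  obtain ⟨k, hk⟩ := Function.ne_iff.mp hx
  rw [nsq_eq_sum]
  exact Finset.sum_pos' (fun k _ => sq_nonneg (x k)) ⟨k, Finset.mem_univ k, sq_pos_iff.mpr hk⟩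

lemma hasFDerivAt_nsq (z : Fin 2 → ℝ) :
    HasFDerivAt nsq ((2 : ℝ) • ∑ k, z k • proj k : (Fin 2 → ℝ) →L[ℝ] ℝ) z := by
  rw [show nsq = fun w => ∑ k, w k ^ 2 from funext nsq_eq_sum]
  exact (HasFDerivAt.fun_sum (A := fun (k : Fin 2) (w : Fin 2 → ℝ) => w k ^ 2) fun k _ =>
    (hasFDerivAt_apply k z).pow 2).congr_fderiv (by ext v; simp; ring)

lemma sum_smul_proj_single (z : Fin 2 → ℝ) (j : Fin 2) :
    (∑ k, z k • proj k : (Fin 2 → ℝ) →L[ℝ] ℝ) (Pi.single j 1) = z j := by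
  fin_cases j <;> simp

-- No condition on `s`: for `s = 0` both `heatG · 0` and the derivative vanish, as `1 / 0 = 0`.
lemma hasFDerivAt_heatG (s : ℝ) (z : Fin 2 → ℝ) :
    HasFDerivAt (heatG · s) (-(heatG z s / (2 * s)) • ∑ k, z k • proj k : (Fin 2 → ℝ) →L[ℝ] ℝ) z := by
  have h := (((hasFDerivAt_nsq z).neg.mul_const (4 * s)⁻¹).exp).const_mul (1 / (4 * π * s))
  exact h.congr_fderiv (by ext v; simp [heatG, div_eq_mul_inv]; ring)

lemma pd_heatG (s : ℝ) (j : Fin 2) (z : Fin 2 → ℝ) :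
    pd j (heatG · s) z = -(z j / (2 * s)) * heatG z s := by
  rw [pd, (hasFDerivAt_heatG s z).fderiv, smul_apply, sum_smul_proj_single, smul_eq_mul]
  ring

lemma hessG_eq (s : ℝ) (i j : Fin 2) (x : Fin 2 → ℝ) :
    hessG i j x s = (x i * x j / (4 * s ^ 2) - (if i = j then 1 else 0) / (2 * s)) * heatG x s := by
  have h : HasFDerivAt (fun z => -(2 * s)⁻¹ * z j * heatG z s) _ x :=
    ((hasFDerivAt_apply j x).const_mul (-(2 * s)⁻¹)).mul (hasFDerivAt_heatG s x)
  have hgrad : (fun z => pd j (heatG · s) z) = fun z => -(2 * s)⁻¹ * z j * heatG z s := by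
    funext z; rw [pd_heatG s]; ring
  rw [hessG, hgrad, pd, h.fderiv]
  simp only [add_apply, smul_apply, sum_smul_proj_single, proj_apply, Pi.single_apply,
    eq_comm (a := j), smul_eq_mul]
  split_ifs <;> ring

lemma hasDerivAt_exp_neg_div (c : ℝ) {s : ℝ} (hs : s ≠ 0) :
    HasDerivAt (fun s => exp (-c / s)) (c * exp (-c / s) / s ^ 2) s :=
  ((hasDerivAt_inv hs).const_mul (-c)).exp.congr_deriv (by rw [← div_eq_mul_inv]; ring)

lemma tendsto_exp_neg_div_atTop (c : ℝ) : Tendsto (fun s => exp (-c / s)) atTop (𝓝 1) := by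
  simpa using ((tendsto_const_nhds (x := -c)).div_atTop tendsto_id).rexp

variable {c t : ℝ}

lemma integral_Ioi_exp_neg_div_div_sq (hc : c ≠ 0) (ht : 0 < t) :
    IntegrableOn (fun s => exp (-c / s) / s ^ 2) (Ioi t) ∧
      ∫ s in Ioi t, exp (-c / s) / s ^ 2 = (1 - exp (-c / t)) / c := by
  have hderiv : ∀ s ∈ Ici t, HasDerivAt (fun s => exp (-c / s) / c) (exp (-c / s) / s ^ 2) s :=
    fun s hs => ((hasDerivAt_exp_neg_div c (ht.trans_le hs).ne').div_const c).congr_deriv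
      (by field_simp)
  have hnonneg : ∀ s ∈ Ioi t, 0 ≤ exp (-c / s) / s ^ 2 := fun s _ => by positivity
  have hlim : Tendsto (fun s => exp (-c / s) / c) atTop (𝓝 (1 / c)) :=
    (tendsto_exp_neg_div_atTop c).div_const c
  refine ⟨integrableOn_Ioi_deriv_of_nonneg' hderiv hnonneg hlim, ?_⟩
  rw [integral_Ioi_of_hasDerivAt_of_nonneg' hderiv hnonneg hlim]
  ring

lemma integral_Ioi_exp_neg_div_div_cube (hc : c ≠ 0) (ht : 0 < t) :
    IntegrableOn (fun s => exp (-c / s) / s ^ 3) (Ioi t) ∧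
      ∫ s in Ioi t, exp (-c / s) / s ^ 3 = (1 - exp (-c / t) * (1 + c * t⁻¹)) / c ^ 2 := by
  have hderiv : ∀ s ∈ Ici t, HasDerivAt (fun s => exp (-c / s) * (1 + c * s⁻¹) / c ^ 2)
      (exp (-c / s) / s ^ 3) s := fun s hs => by
    have hs : s ≠ 0 := (ht.trans_le hs).ne'
    exact (((hasDerivAt_exp_neg_div c hs).mul
      (((hasDerivAt_inv hs).const_mul c).const_add 1))).div_const (c ^ 2) |>.congr_deriv
      (by field_simp; ring)
  have hnonneg : ∀ s ∈ Ioi t, 0 ≤ exp (-c / s) / s ^ 3 := fun s hs => by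
    have := ht.trans hs; positivity
  have hlim : Tendsto (fun s => exp (-c / s) * (1 + c * s⁻¹) / c ^ 2) atTop (𝓝 (1 / c ^ 2)) := by
    simpa using ((tendsto_exp_neg_div_atTop c).mul
      ((tendsto_inv_atTop_zero.const_mul c).const_add 1)).div_const (c ^ 2)
  refine ⟨integrableOn_Ioi_deriv_of_nonneg' hderiv hnonneg hlim, ?_⟩
  rw [integral_Ioi_of_hasDerivAt_of_nonneg' hderiv hnonneg hlim]
  ring

/-- Closed form for `H(x,t) = ∫_t^∞ ∇²G(x,s) ds`:
`H = −(x⊗x/|x|²) G(x,t) + (x⊗x/|x|² − 𝕀/2)(1 − e^{−|x|²/(4t)})/(π|x|²)`,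
with the integral converging absolutely for `x ≠ 0`, `t > 0`. -/
theorem H_closed_form (x : Fin 2 → ℝ) (hx : x ≠ 0) (t : ℝ) (ht : 0 < t) (i j : Fin 2) :
    IntegrableOn (fun s => hessG i j x s) (Set.Ioi t) ∧
    ∫ s in Set.Ioi t, hessG i j x s
      = -(x i * x j / nsq x) * heatG x t
        + (x i * x j / nsq x - (if i = j then (1 : ℝ) else 0) / 2)
          * (1 - Real.exp (-(nsq x) / (4 * t))) / (π * nsq x) := by
  have hQ : nsq x ≠ 0 := (nsq_pos hx).ne'
  have hc : nsq x / 4 ≠ 0 := by positivity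
  have hexp (s : ℝ) : -nsq x / (4 * s) = -(nsq x / 4) / s := by ring
  obtain ⟨hint₃, hI₃⟩ := integral_Ioi_exp_neg_div_div_cube hc ht
  obtain ⟨hint₂, hI₂⟩ := integral_Ioi_exp_neg_div_div_sq hc ht
  have hint : IntegrableOn _ (Ioi t) := (hint₃.const_mul (x i * x j / (16 * π))).sub
    (hint₂.const_mul ((if i = j then 1 else 0) / (8 * π)))
  have hEq : EqOn (fun s => x i * x j / (16 * π) * (exp (-(nsq x / 4) / s) / s ^ 3)
      - (if i = j then 1 else 0) / (8 * π) * (exp (-(nsq x / 4) / s) / s ^ 2))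
      (hessG i j x ·) (Ioi t) := fun s hs => by
    have hs₀ : s ≠ 0 := (ht.trans hs).ne'
    simp only [hessG_eq, heatG, hexp]
    field_simp
    ring
  refine ⟨hint.congr_fun hEq measurableSet_Ioi, ?_⟩
  rw [← setIntegral_congr_fun measurableSet_Ioi hEq, integral_sub (hint₃.const_mul _)
    (hint₂.const_mul _), integral_const_mul, integral_const_mul, hI₃, hI₂, heatG, hexp]
  field_simp
  ring
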